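/- There exists a balanced quadtree that admits no proper coloring with 2 colors under edge adjacency; hence the bound of 3 colors for balanced quadtrees under edge adjacency is tight. -/
import Mathlib


/-- A dyadic square `[i/2^k, (i+1)/2^k] × [j/2^k, (j+1)/2^k] ⊆ [0,1]²`,
recorded by its level `k` and coordinates `i, j < 2^k`. -/
structure DyadicSquare where
  k : ℕ
  i : ℕ
  j : ℕ
  hi : i < 2 ^ k
  hj : j < 2 ^ k
deriving DecidableEq

namespace DyadicSquare

/-- The subset of the plane occupied by a dyadic square. -/
def region (s : DyadicSquare) : Set (ℝ × ℝ) :=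
  Set.Icc ((s.i : ℝ) / 2 ^ s.k) (((s.i : ℝ) + 1) / 2 ^ s.k) ×ˢ
    Set.Icc ((s.j : ℝ) / 2 ^ s.k) (((s.j : ℝ) + 1) / 2 ^ s.k)

/-- Two squares are edge-adjacent if they are distinct and their intersection
contains more than one point (a segment of positive length). -/
def EdgeAdj (s t : DyadicSquare) : Prop :=
  s ≠ t ∧ (s.region ∩ t.region).Nontrivial

/-- Two squares are corner-adjacent if they are distinct and their intersection
is nonempty (they share at least a corner point or part of an edge). -/
def CornerAdj (s t : DyadicSquare) : Prop :=
  s ≠ t ∧ (s.region ∩ t.region).Nonempty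

end DyadicSquare

/-- A finite set of dyadic squares has pairwise disjoint interiors. -/
def PairwiseDisjointInteriors (Q : Finset DyadicSquare) : Prop :=
  (Q : Set DyadicSquare).Pairwise fun s t =>
    interior s.region ∩ interior t.region = ∅

/-- A quadtree: a finite set of dyadic squares with pairwise disjoint interiors
whose union is the unit square `[0,1]²`. -/
def IsQuadtree (Q : Finset DyadicSquare) : Prop :=
  PairwiseDisjointInteriors Q ∧
    (⋃ s ∈ Q, s.region) = Set.Icc (0 : ℝ) 1 ×ˢ Set.Icc (0 : ℝ) 1

/-- A quadtree is balanced if any two edge-adjacent squares have side lengths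
(`2^{-k}`) within a factor of two of each other. -/
def IsBalanced (Q : Finset DyadicSquare) : Prop :=
  ∀ s ∈ Q, ∀ t ∈ Q, DyadicSquare.EdgeAdj s t → s.k ≤ t.k + 1 ∧ t.k ≤ s.k + 1

set_option maxHeartbeats 1000000

namespace BQNTC

def sNW : DyadicSquare := ⟨1,0,1, by norm_num, by norm_num⟩
def sNE : DyadicSquare := ⟨1,1,1, by norm_num, by norm_num⟩
def sSE : DyadicSquare := ⟨1,1,0, by norm_num, by norm_num⟩
def sa : DyadicSquare := ⟨2,0,0, by norm_num, by norm_num⟩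
def sb : DyadicSquare := ⟨2,1,0, by norm_num, by norm_num⟩
def sc : DyadicSquare := ⟨2,0,1, by norm_num, by norm_num⟩
def sd : DyadicSquare := ⟨2,1,1, by norm_num, by norm_num⟩

def Q : Finset DyadicSquare := {sNW, sNE, sSE, sa, sb, sc, sd}

lemma mem_region (s : DyadicSquare) (p : ℝ × ℝ) :
    p ∈ s.region ↔ (s.i:ℝ)/2^s.k ≤ p.1 ∧ p.1 ≤ ((s.i:ℝ)+1)/2^s.k ∧
      (s.j:ℝ)/2^s.k ≤ p.2 ∧ p.2 ≤ ((s.j:ℝ)+1)/2^s.k := by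
  simp only [DyadicSquare.region, Set.mem_prod, Set.mem_Icc, Prod.le_def]
  tauto

lemma interior_eq (s : DyadicSquare) : interior s.region =
    Set.Ioo ((s.i : ℝ) / 2 ^ s.k) (((s.i : ℝ) + 1) / 2 ^ s.k) ×ˢ
    Set.Ioo ((s.j : ℝ) / 2 ^ s.k) (((s.j : ℝ) + 1) / 2 ^ s.k) := by
  rw [DyadicSquare.region, interior_prod_eq, interior_Icc, interior_Icc]

lemma disj (s t : DyadicSquare)
    (h : ((s.i:ℝ)+1)/2^s.k ≤ (t.i:ℝ)/2^t.k ∨ ((t.i:ℝ)+1)/2^t.k ≤ (s.i:ℝ)/2^s.k ∨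
         ((s.j:ℝ)+1)/2^s.k ≤ (t.j:ℝ)/2^t.k ∨ ((t.j:ℝ)+1)/2^t.k ≤ (s.j:ℝ)/2^s.k) :
    interior s.region ∩ interior t.region = ∅ := by
  rw [interior_eq, interior_eq]
  ext ⟨x,y⟩
  simp only [Set.mem_inter_iff, Set.mem_prod, Set.mem_Ioo, Set.mem_empty_iff_false, iff_false]
  rintro ⟨⟨⟨h1,h2⟩,h3,h4⟩,⟨h5,h6⟩,h7,h8⟩
  rcases h with h|h|h|h <;> linarith

lemma nt (s t : DyadicSquare) (p q : ℝ × ℝ) (hp1 : p ∈ s.region) (hp2 : p ∈ t.region)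
    (hq1 : q ∈ s.region) (hq2 : q ∈ t.region) (hpq : p ≠ q) :
    (s.region ∩ t.region).Nontrivial :=
  ⟨p, ⟨hp1, hp2⟩, q, ⟨hq1, hq2⟩, hpq⟩

theorem main :
    ∃ Q : Finset DyadicSquare, IsQuadtree Q ∧ IsBalanced Q ∧
      ¬ ∃ f : DyadicSquare → Fin 2,
          ∀ s ∈ Q, ∀ t ∈ Q, DyadicSquare.EdgeAdj s t → f s ≠ f t := by
  refine ⟨Q, ⟨?_, ?_⟩, ?_, ?_⟩
  · -- pairwise disjoint interiors
    intro s hs t ht hne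
    simp only [Q, Finset.coe_insert, Set.mem_insert_iff, Finset.coe_singleton,
      Set.mem_singleton_iff] at hs ht
    rcases hs with rfl|rfl|rfl|rfl|rfl|rfl|rfl <;>
      rcases ht with rfl|rfl|rfl|rfl|rfl|rfl|rfl <;>
      first
        | exact absurd rfl hne
        | (apply disj; norm_num [sNW, sNE, sSE, sa, sb, sc, sd])
  · -- union is the unit square
    ext ⟨x, y⟩
    simp only [Set.mem_iUnion, exists_prop, Set.mem_prod, Set.mem_Icc, Q,
      Finset.mem_insert, Finset.mem_singleton]
    constructor
    · rintro ⟨s, hs, hp⟩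
      rcases hs with rfl|rfl|rfl|rfl|rfl|rfl|rfl <;>
      · rw [mem_region] at hp
        norm_num [sNW, sNE, sSE, sa, sb, sc, sd] at hp
        obtain ⟨h1, h2, h3, h4⟩ := hp
        exact ⟨⟨by linarith, by linarith⟩, by linarith, by linarith⟩
    · rintro ⟨⟨hx0, hx1⟩, hy0, hy1⟩
      by_cases hx : (1:ℝ)/2 ≤ x
      · by_cases hy : (1:ℝ)/2 ≤ y
        · refine ⟨sNE, by simp, ?_⟩
          rw [mem_region]; norm_num [sNE]
          exact ⟨by linarith, by linarith, by linarith, by linarith⟩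
        · refine ⟨sSE, by simp, ?_⟩
          rw [mem_region]; norm_num [sSE]
          exact ⟨by linarith, by linarith, by linarith, by linarith⟩
      · by_cases hy : (1:ℝ)/2 ≤ y
        · refine ⟨sNW, by simp, ?_⟩
          rw [mem_region]; norm_num [sNW]
          exact ⟨by linarith, by linarith, by linarith, by linarith⟩
        · push_neg at hx hy
          by_cases hx4 : (1:ℝ)/4 ≤ x
          · by_cases hy4 : (1:ℝ)/4 ≤ y
            · refine ⟨sd, by simp, ?_⟩
              rw [mem_region]; norm_num [sd]
              exact ⟨by linarith, by linarith, by linarith, by linarith⟩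
            · refine ⟨sb, by simp, ?_⟩
              rw [mem_region]; norm_num [sb]
              exact ⟨by linarith, by linarith, by linarith, by linarith⟩
          · by_cases hy4 : (1:ℝ)/4 ≤ y
            · refine ⟨sc, by simp, ?_⟩
              rw [mem_region]; norm_num [sc]
              exact ⟨by linarith, by linarith, by linarith, by linarith⟩
            · refine ⟨sa, by simp, ?_⟩
              rw [mem_region]; norm_num [sa]
              exact ⟨by linarith, by linarith, by linarith, by linarith⟩
  · -- balanced
    intro s hs t ht _
    simp only [Q, Finset.mem_insert, Finset.mem_singleton] at hs ht
    rcases hs with rfl|rfl|rfl|rfl|rfl|rfl|rfl <;>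
      rcases ht with rfl|rfl|rfl|rfl|rfl|rfl|rfl <;> exact ⟨by norm_num [sNW,sNE,sSE,sa,sb,sc,sd], by norm_num [sNW,sNE,sSE,sa,sb,sc,sd]⟩
  · -- not 2-colorable: triangle sc, sd, sNW
    rintro ⟨f, hf⟩
    have hcQ : sc ∈ Q := by simp [Q]
    have hdQ : sd ∈ Q := by simp [Q]
    have hNWQ : sNW ∈ Q := by simp [Q]
    have hcd : DyadicSquare.EdgeAdj sc sd := by
      refine ⟨by simp [sNW,sc,sd], nt _ _ (1/4, 1/4) (1/4, 1/2) ?_ ?_ ?_ ?_ (by norm_num)⟩ <;>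
        (rw [mem_region]; norm_num [sc, sd])
    have hcNW : DyadicSquare.EdgeAdj sc sNW := by
      refine ⟨by simp [sNW,sc,sd], nt _ _ (0, 1/2) (1/4, 1/2) ?_ ?_ ?_ ?_ (by norm_num)⟩ <;>
        (rw [mem_region]; norm_num [sc, sNW])
    have hdNW : DyadicSquare.EdgeAdj sd sNW := by
      refine ⟨by simp [sNW,sc,sd], nt _ _ (1/4, 1/2) (1/2, 1/2) ?_ ?_ ?_ ?_ (by norm_num)⟩ <;>
        (rw [mem_region]; norm_num [sd, sNW])
    have h1 := hf sc hcQ sd hdQ hcd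
    have h2 := hf sc hcQ sNW hNWQ hcNW
    have h3 := hf sd hdQ sNW hNWQ hdNW
    have v1 := (f sc).isLt
    have v2 := (f sd).isLt
    have v3 := (f sNW).isLt
    rw [Ne, Fin.ext_iff] at h1 h2 h3
    omega

end BQNTC

/-- Some balanced quadtree admits no proper 2-coloring under edge adjacency. -/
theorem balanced_quadtree_not_two_colorable :
    ∃ Q : Finset DyadicSquare, IsQuadtree Q ∧ IsBalanced Q ∧
      ¬ ∃ f : DyadicSquare → Fin 2,
          ∀ s ∈ Q, ∀ t ∈ Q, DyadicSquare.EdgeAdj s t → f s ≠ f t := by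
  exact BQNTC.main
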